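/- Let P be an n-qubit Pauli string (a tensor product of single-site I, X, Y, Z). Under the uniform random-XZ measurement ensemble, the measurement channel M_XZ satisfies M_XZ(P) = (1/2^{k(P)})·P if P contains no Y factor, where k(P) is the number of non-identity sites of P, and M_XZ(P) = 0 if P contains at least one Y factor. -/

import Mathlib

open Matrix

noncomputable section

/-- Pauli X matrix. -/
def Xm : Matrix (Fin 2) (Fin 2) ℂ := !![0, 1; 1, 0]
/-- Pauli Y matrix. -/
def Ym : Matrix (Fin 2) (Fin 2) ℂ := !![0, -Complex.I; Complex.I, 0]
/-- Pauli Z matrix. -/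
def Zm : Matrix (Fin 2) (Fin 2) ℂ := !![1, 0; 0, -1]
/-- Hadamard matrix. -/
def Hm : Matrix (Fin 2) (Fin 2) ℂ := ((Real.sqrt 2 : ℂ))⁻¹ • !![1, 1; 1, -1]

/-- The space of `n`-qubit operators. -/
abbrev QOp (n : ℕ) := Matrix (Fin n → Fin 2) (Fin n → Fin 2) ℂ

/-- Tensor (Kronecker) product of a family of single-qubit matrices. -/
def prodMat (n : ℕ) (f : Fin n → Matrix (Fin 2) (Fin 2) ℂ) : QOp n :=
  fun b b' => ∏ i, f i (b i) (b' i)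

/-- The single-qubit Paulis indexed by `Fin 4`: `0 ↦ I`, `1 ↦ X`, `2 ↦ Y`, `3 ↦ Z`. -/
def pauli : Fin 4 → Matrix (Fin 2) (Fin 2) ℂ := ![1, Xm, Ym, Zm]

/-- An `n`-qubit Pauli string. -/
def PStr (n : ℕ) (p : Fin n → Fin 4) : QOp n := prodMat n (fun i => pauli (p i))

/-- The product measurement unitary `U = ⊗_i U^{α_i}` with `U^X = H`, `U^Z = I`;
`α i = true` means measuring site `i` in the `X` basis. -/
def Umeas (n : ℕ) (α : Fin n → Bool) : QOp n := prodMat n (fun i => if α i then Hm else 1)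

/-- The random-XZ measurement channel
`M_XZ(A) = E_{U∼U_XZ} Σ_b ⟨b|UAU†|b⟩ · U†|b⟩⟨b|U`. -/
def MXZ (n : ℕ) (A : QOp n) : QOp n :=
  ((2 : ℂ) ^ n)⁻¹ • ∑ α : Fin n → Bool, ∑ b : Fin n → Fin 2,
    ((Umeas n α * A * (Umeas n α)ᴴ) b b) •
      ((Umeas n α)ᴴ * Matrix.single b b 1 * Umeas n α)

/-! Both the measurement ensemble and a Pauli string are tensor products over the sites, so
`M_XZ` acts site by site: `M_XZ (⊗ Pᵢ) = ⊗ M₁ Pᵢ`, where `M₁` averages the measure-and-prepare maps in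
the `Z` basis and in the `X` basis. Measuring in the `Z` basis keeps the diagonal (`I`, `Z`) and
kills `X`, `Y`; measuring in the `X` basis keeps `I`, `X` and kills `Y`, `Z`. Hence `M₁` fixes `I`,
halves `X` and `Z` and annihilates `Y`, and the eigenvalue of a string is the product over its sites. -/

open Finset

def siteUnitary (a : Bool) : Matrix (Fin 2) (Fin 2) ℂ := if a then Hm else 1

def measurePrepare (U M : Matrix (Fin 2) (Fin 2) ℂ) : Matrix (Fin 2) (Fin 2) ℂ :=
  ∑ β : Fin 2, (U * M * Uᴴ) β β • (Uᴴ * single β β 1 * U)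

def MXZ₁ (M : Matrix (Fin 2) (Fin 2) ℂ) : Matrix (Fin 2) (Fin 2) ℂ :=
  (2 : ℂ)⁻¹ • ∑ a : Bool, measurePrepare (siteUnitary a) M

def mxzEigenvalue : Fin 4 → ℂ := ![1, 2⁻¹, 0, 2⁻¹]

lemma measurePrepare_one (M : Matrix (Fin 2) (Fin 2) ℂ) :
    measurePrepare 1 M = diagonal fun i => M i i := by
  ext i j
  fin_cases i <;> fin_cases j <;> simp [measurePrepare, Fin.sum_univ_two]

lemma measurePrepare_Hm (M : Matrix (Fin 2) (Fin 2) ℂ) :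
    measurePrepare Hm M =
      (2 : ℂ)⁻¹ • !![M 0 0 + M 1 1, M 0 1 + M 1 0; M 0 1 + M 1 0, M 0 0 + M 1 1] := by
  have h : ((Real.sqrt 2 : ℂ)⁻¹) ^ 4 = 4⁻¹ := by
    rw [inv_pow, show 4 = 2 * 2 by rfl, pow_mul, ← Complex.ofReal_pow, Real.sq_sqrt zero_le_two]
    norm_num
  ext i j
  fin_cases i <;> fin_cases j <;>
    simp [measurePrepare, Fin.sum_univ_two, mul_apply, Hm, single_apply, vecMul, dotProduct] <;>
    ring_nf <;> simp only [h] <;> ring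

lemma MXZ₁_pauli (q : Fin 4) : MXZ₁ (pauli q) = mxzEigenvalue q • pauli q := by
  simp only [MXZ₁, Fintype.sum_bool, siteUnitary, ↓reduceIte, Bool.false_eq_true, measurePrepare_Hm,
    measurePrepare_one]
  ext i j
  fin_cases q <;> fin_cases i <;> fin_cases j <;> norm_num [pauli, mxzEigenvalue, Xm, Ym, Zm]

lemma prodMat_mul {n : ℕ} (f g : Fin n → Matrix (Fin 2) (Fin 2) ℂ) :
    prodMat n f * prodMat n g = prodMat n (fun i => f i * g i) := by
  ext x y
  simp only [mul_apply, prodMat, Fintype.prod_sum, prod_mul_distrib]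

lemma prodMat_conjTranspose {n : ℕ} (f : Fin n → Matrix (Fin 2) (Fin 2) ℂ) :
    (prodMat n f)ᴴ = prodMat n (fun i => (f i)ᴴ) := by
  ext x y
  simp [prodMat, conjTranspose_apply, star_prod]

lemma prodMat_smul {n : ℕ} (c : Fin n → ℂ) (f : Fin n → Matrix (Fin 2) (Fin 2) ℂ) :
    prodMat n (fun i => c i • f i) = (∏ i, c i) • prodMat n f := by
  ext x y
  simp [prodMat, prod_mul_distrib]

lemma single_one_eq_prodMat {n : ℕ} (b : Fin n → Fin 2) :
    single b b (1 : ℂ) = prodMat n (fun i => single (b i) (b i) 1) := by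
  ext x y
  simp only [prodMat, single_apply, prod_boole, mem_univ, forall_const, funext_iff, forall_and]

lemma Umeas_eq_prodMat {n : ℕ} (α : Fin n → Bool) :
    Umeas n α = prodMat n (fun i => siteUnitary (α i)) := rfl

lemma MXZ_prodMat {n : ℕ} (f : Fin n → Matrix (Fin 2) (Fin 2) ℂ) :
    MXZ n (prodMat n f) = prodMat n (fun i => MXZ₁ (f i)) := by
  ext x y
  simp only [MXZ, Umeas_eq_prodMat, prodMat_conjTranspose, single_one_eq_prodMat, prodMat_mul,
    Matrix.smul_apply, Matrix.sum_apply, smul_eq_mul]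
  simp only [prodMat, ← prod_mul_distrib, MXZ₁, measurePrepare,
    Matrix.smul_apply, Matrix.sum_apply, smul_eq_mul]
  rw [prod_mul_distrib, prod_const, card_univ, Fintype.card_fin, inv_pow]
  congr 1
  simp only [Fintype.prod_sum]

lemma MXZ_PStr {n : ℕ} (p : Fin n → Fin 4) :
    MXZ n (PStr n p) = (∏ i, mxzEigenvalue (p i)) • PStr n p := by
  simp only [PStr, MXZ_prodMat, MXZ₁_pauli, prodMat_smul]

lemma prod_mxzEigenvalue_of_ne_two {n : ℕ} (p : Fin n → Fin 4) (hp : ∀ i, p i ≠ 2) :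
    ∏ i, mxzEigenvalue (p i) = ((2 : ℂ) ^ #{i | p i ≠ 0})⁻¹ := by
  have h : ∀ i, mxzEigenvalue (p i) = if p i ≠ 0 then 2⁻¹ else 1 := fun i => by
    have := hp i
    generalize p i = q at *
    fin_cases q <;> simp_all [mxzEigenvalue]
  rw [prod_congr rfl fun i _ => h i, ← prod_filter, prod_const, inv_pow]

/-- Eigenvalues of the random-XZ measurement channel on Pauli strings: a `Y`-free Pauli
string of weight `k` has eigenvalue `2^{-k}`, and any string containing a `Y` is
annihilated. -/
theorem stmt3 (n : ℕ) (p : Fin n → Fin 4) :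
    ((∀ i, p i ≠ 2) →
      MXZ n (PStr n p)
        = ((2 : ℂ) ^ (Finset.univ.filter fun i => p i ≠ 0).card)⁻¹ • PStr n p) ∧
    ((∃ i, p i = 2) → MXZ n (PStr n p) = 0) := by
  rw [MXZ_PStr]
  refine ⟨fun hp => by rw [prod_mxzEigenvalue_of_ne_two p hp], fun ⟨i, hi⟩ => ?_⟩
  rw [prod_eq_zero (mem_univ i) (by rw [hi]; rfl), zero_smul]
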